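/- Let m and n be two concise messages of a medium, both producing a state V from a state S. Then the string n is a permutation of the string m; in particular, C(m) = C(n) and ℓ(m) = ℓ(n). -/

import Mathlib

open scoped Classical symmDiff

universe u

namespace Media

variable {S : Type u}

/-- The state obtained by applying the message (string of tokens) `m` to the state `s`. -/
def apply (s : S) (m : List (S → S)) : S :=
  m.foldl (fun x τ => τ x) s

/-- The sequence of states `S₀ = s, S₁, …, Sₙ` produced by the message `m` from the state `s`. -/
def produced (s : S) (m : List (S → S)) : List S :=
  m.scanl (fun x τ => τ x) s

/-- `τ'` is a reverse of the token `τ`. -/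
def IsReverse (τ τ' : S → S) : Prop :=
  ∀ P Q : S, P ≠ Q → (τ P = Q ↔ τ' Q = P)

/-- The message `m` is stepwise effective for the state `s`. -/
def StepwiseEffective (s : S) (m : List (S → S)) : Prop :=
  List.Chain' (· ≠ ·) (produced s m)

/-- The message `m` is consistent: it does not contain both a token and its reverse. -/
def Consistent (m : List (S → S)) : Prop :=
  ∀ τ ∈ m, ∀ τ' ∈ m, ¬ IsReverse τ τ'

/-- The message `m` is concise for the state `s`. -/
def Concise (s : S) (m : List (S → S)) : Prop :=
  StepwiseEffective s m ∧ Consistent m ∧ m.Nodup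

/-- The message `m` is vacuous: its indices can be partitioned into pairs of
mutually reverse tokens. -/
def Vacuous (m : List (S → S)) : Prop :=
  ∃ f : Fin m.length → Fin m.length, Function.Involutive f ∧
    (∀ i, f i ≠ i) ∧ ∀ i, IsReverse (m.get i) (m.get (f i))

/-- The message `m` is closed for the state `s`. -/
def Closed (s : S) (m : List (S → S)) : Prop :=
  StepwiseEffective s m ∧ apply s m = s

/-- `(S, T)` is a medium: a token system satisfying axioms [M1] and [M2]. -/
def IsMedium (T : Set (S → S)) : Prop :=
  (∃ a b : S, a ≠ b) ∧ T.Nonempty ∧ (∀ τ ∈ T, τ ≠ id) ∧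
  (∀ P Q : S, P ≠ Q →
    ∃ m : List (S → S), (∀ τ ∈ m, τ ∈ T) ∧ Concise P m ∧ apply P m = Q) ∧
  (∀ (P : S) (m : List (S → S)), (∀ τ ∈ m, τ ∈ T) → Closed P m → Vacuous m)

end Media

open Media

/-!
Glue `m` to the reverse `ñ` of `n` (reversed order, each token replaced by its reverse): since
`m` and `n` end at the same state, `m ñ` is closed for `s`, hence vacuous by [M2]. A token `τ` of
`m` cannot be paired with a token of the consistent message `m`, so it is paired with the reverse
of some `σ` in `n`, and uniqueness of reverses gives `τ = σ`. Hence `C(m) ⊆ C(n)`, symmetrically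
`C(n) ⊆ C(m)`, and two duplicate-free lists with the same elements are permutations.

Reverses exist in a medium for the same reason: if `τ P ≠ P`, then `τ` followed by a concise
message from `τ P` back to `P` is closed, hence vacuous, so `τ` is paired with a reverse.
-/

namespace Media

variable {S : Type u}

theorem IsReverse.symm {τ τ' : S → S} (h : IsReverse τ τ') : IsReverse τ' τ :=
  fun P Q hPQ => (h Q P hPQ.symm).symm

theorem IsReverse.unique {a b c : S → S} (hb : IsReverse a b) (hc : IsReverse a c) : b = c := by
  have key : ∀ {b c : S → S}, IsReverse a b → IsReverse a c → ∀ q, b q ≠ q → c q = b q :=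
    fun hb hc q hq => (hc _ q hq).1 ((hb _ q hq).2 rfl)
  funext q
  by_cases hbq : b q = q
  · by_cases hcq : c q = q
    · rw [hbq, hcq]
    · exact key hc hb q hcq
  · exact (key hb hc q hbq).symm

theorem IsReverse.unique_left {a b c : S → S} (ha : IsReverse a c) (hb : IsReverse b c) :
    a = b :=
  ha.symm.unique hb.symm

@[simp]
theorem apply_nil (s : S) : apply s [] = s := rfl

@[simp]
theorem apply_cons (s : S) (τ : S → S) (m : List (S → S)) :
    apply s (τ :: m) = apply (τ s) m := rfl

theorem apply_append (s : S) (m n : List (S → S)) :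
    apply s (m ++ n) = apply (apply s m) n :=
  List.foldl_append

@[simp]
theorem stepwiseEffective_nil (s : S) : StepwiseEffective s [] :=
  List.isChain_singleton s

@[simp]
theorem stepwiseEffective_cons {s : S} {τ : S → S} {m : List (S → S)} :
    StepwiseEffective s (τ :: m) ↔ τ s ≠ s ∧ StepwiseEffective (τ s) m := by
  change List.IsChain _ (produced s (τ :: m)) ↔ _ ∧ List.IsChain _ (produced (τ s) m)
  simp only [produced, List.scanl_cons, List.isChain_cons, List.head?_scanl, Option.mem_def,
    Option.some.injEq, forall_eq', ne_comm]

theorem stepwiseEffective_append {s : S} {m n : List (S → S)} :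
    StepwiseEffective s (m ++ n) ↔ StepwiseEffective s m ∧ StepwiseEffective (apply s m) n := by
  induction m generalizing s with
  | nil => simp
  | cons τ l ih => simp [ih, and_assoc]

theorem closed_append_reverse_map {rev : (S → S) → S → S} {s : S} {n : List (S → S)}
    (hn : StepwiseEffective s n) (hrev : ∀ σ ∈ n, IsReverse σ (rev σ)) :
    Closed s (n ++ (n.map rev).reverse) := by
  induction n generalizing s with
  | nil => exact ⟨stepwiseEffective_nil s, rfl⟩
  | cons τ l ih =>
    obtain ⟨hτs, hl⟩ := stepwiseEffective_cons.1 hn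
    obtain ⟨hse, happly⟩ := ih hl fun σ hσ => hrev σ (List.mem_cons_of_mem τ hσ)
    have hback : rev τ (τ s) = s := (hrev τ List.mem_cons_self s (τ s) hτs.symm).1 rfl
    have hsplit : τ :: l ++ ((τ :: l).map rev).reverse =
        τ :: (l ++ (l.map rev).reverse ++ [rev τ]) := by
      simp
    rw [hsplit, Closed, stepwiseEffective_cons, stepwiseEffective_append (m := l ++ _),
      apply_cons, apply_append (m := l ++ _), happly]
    exact ⟨⟨hτs, hse, by simpa [hback] using hτs.symm⟩, hback⟩

theorem Vacuous.exists_isReverse_of_mem {m : List (S → S)} (hm : Vacuous m) {τ : S → S}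
    (hτ : τ ∈ m) : ∃ τ' ∈ m, IsReverse τ τ' := by
  obtain ⟨f, -, -, hpair⟩ := hm
  obtain ⟨i, rfl⟩ := List.get_of_mem hτ
  exact ⟨m.get (f i), List.get_mem _ _, hpair i⟩

section Medium

variable {T : Set (S → S)}

theorem IsMedium.exists_isReverse (hM : IsMedium T) {τ : S → S} (hτ : τ ∈ T) :
    ∃ τ' ∈ T, IsReverse τ τ' := by
  obtain ⟨-, -, hid, hM1, hM2⟩ := hM
  obtain ⟨P, hP⟩ := Function.ne_iff.1 (hid τ hτ)
  obtain ⟨m, hmT, hmc, hmP⟩ := hM1 (τ P) P hP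
  have hT : ∀ σ ∈ τ :: m, σ ∈ T := List.forall_mem_cons.2 ⟨hτ, hmT⟩
  have hclosed : Closed P (τ :: m) := ⟨stepwiseEffective_cons.2 ⟨hP, hmc.1⟩, hmP⟩
  obtain ⟨τ', hτ'm, hττ'⟩ := (hM2 P _ hT hclosed).exists_isReverse_of_mem List.mem_cons_self
  exact ⟨τ', hT τ' hτ'm, hττ'⟩

theorem IsMedium.exists_reverse_map (hM : IsMedium T) :
    ∃ rev : (S → S) → S → S, ∀ τ ∈ T, rev τ ∈ T ∧ IsReverse τ (rev τ) := by
  refine ⟨fun τ => if hτ : τ ∈ T then (hM.exists_isReverse hτ).choose else τ, fun τ hτ => ?_⟩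
  simpa only [dif_pos hτ] using (hM.exists_isReverse hτ).choose_spec

theorem IsMedium.subset_of_apply_eq (hM : IsMedium T) {s : S} {m n : List (S → S)}
    (hmT : ∀ τ ∈ m, τ ∈ T) (hnT : ∀ τ ∈ n, τ ∈ T)
    (hm : StepwiseEffective s m) (hmcons : Consistent m) (hn : StepwiseEffective s n)
    (heq : apply s m = apply s n) : m ⊆ n := by
  obtain ⟨rev, hrev⟩ := hM.exists_reverse_map
  have hrevn : ∀ σ ∈ n, IsReverse σ (rev σ) := fun σ hσ => (hrev σ (hnT σ hσ)).2
  obtain ⟨hñ, hñs⟩ := closed_append_reverse_map hn hrevn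
  rw [stepwiseEffective_append] at hñ
  rw [apply_append] at hñs
  have hclosed : Closed s (m ++ (n.map rev).reverse) :=
    ⟨stepwiseEffective_append.2 ⟨hm, heq ▸ hñ.2⟩, by rw [apply_append, heq, hñs]⟩
  have hT : ∀ σ ∈ m ++ (n.map rev).reverse, σ ∈ T := by
    simp only [List.mem_append, List.mem_reverse, List.mem_map]
    rintro σ (hσ | ⟨ρ, hρ, rfl⟩)
    exacts [hmT σ hσ, (hrev ρ (hnT ρ hρ)).1]
  obtain ⟨-, -, -, -, hM2⟩ := hM
  intro τ hτ
  obtain ⟨τ', hτ', hττ'⟩ :=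
    (hM2 s _ hT hclosed).exists_isReverse_of_mem (List.mem_append_left _ hτ)
  rcases List.mem_append.1 hτ' with hτ'm | hτ'ñ
  · exact absurd hττ' (hmcons τ hτ τ' hτ'm)
  · obtain ⟨σ, hσ, rfl⟩ := List.mem_map.1 (List.mem_reverse.1 hτ'ñ)
    rwa [hττ'.unique_left (hrevn σ hσ)]

end Medium

end Media

/-- Corollary 5.1: two concise messages producing the same state `v` from the
same state `s` are permutations of one another; in particular they have the same
content and the same length. -/
theorem concise_perm_of_same_endpoints {S : Type u} {T : Set (S → S)}
    (hM : IsMedium T) (s v : S) (m n : List (S → S))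
    (hm : ∀ τ ∈ m, τ ∈ T) (hn : ∀ τ ∈ n, τ ∈ T)
    (hmc : Concise s m) (hnc : Concise s n)
    (hvm : apply s m = v) (hvn : apply s n = v) :
    m.Perm n ∧ {τ | τ ∈ m} = {τ | τ ∈ n} ∧ m.length = n.length := by
  have hmn := hM.subset_of_apply_eq hm hn hmc.1 hmc.2.1 hnc.1 (hvm.trans hvn.symm)
  have hnm := hM.subset_of_apply_eq hn hm hnc.1 hnc.2.1 hmc.1 (hvn.trans hvm.symm)
  have hperm : m.Perm n :=
    (List.perm_ext_iff_of_nodup hmc.2.2 hnc.2.2).2 fun τ => ⟨@hmn τ, @hnm τ⟩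
  exact ⟨hperm, Set.ext fun τ => hperm.mem_iff, hperm.length_eq⟩
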